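/- arXiv:2405.05905 — 7 statements merged into one kernel-verified Lean document; each statement's English description precedes it below -/
import Mathlib

section
/- For every probability mass function π on Y, the objective J(π) = ∑_{y∈Y} π(y)·r(y) − τ·∑_{y∈Y} π(y)·log(π(y)/π_ref(y)) satisfies J(π) ≤ J(π*), where π* is the probability mass function defined by π*(y) = π_ref(y)·exp(r(y)/τ) / Z with Z = ∑_{y'∈Y} π_ref(y')·exp(r(y')/τ). In other words, π* maximizes the KL-regularized aggregate-reward objective over all probability mass functions on Y. -/
/-- The Gibbs distribution `π*` maximizes the KL-regularized
aggregate-reward objective over all probability mass functions on `Y`. -/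
theorem mosaic_opt_distribution_maximizes
    {Y : Type*} [Fintype Y] [Nonempty Y]
    (πref : Y → ℝ) (hπref_pos : ∀ y, 0 < πref y) (hπref_sum : ∑ y, πref y = 1)
    (r : Y → ℝ) (τ : ℝ) (hτ : 0 < τ)
    (J : (Y → ℝ) → ℝ)
    (hJ : ∀ p, J p = (∑ y, p y * r y) - τ * ∑ y, p y * Real.log (p y / πref y))
    (Z : ℝ) (hZ : Z = ∑ y', πref y' * Real.exp (r y' / τ))
    (πstar : Y → ℝ) (hπstar : ∀ y, πstar y = πref y * Real.exp (r y / τ) / Z)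
    (π : Y → ℝ) (hπ_nonneg : ∀ y, 0 ≤ π y) (hπ_sum : ∑ y, π y = 1) :
    J π ≤ J πstar := by
  have hZpos : 0 < Z := by
    rw [hZ]
    exact Finset.sum_pos (fun y _ => mul_pos (hπref_pos y) (Real.exp_pos _))
      Finset.univ_nonempty
  have hstar_pos : ∀ y, 0 < πstar y := fun y => by
    rw [hπstar]; exact div_pos (mul_pos (hπref_pos y) (Real.exp_pos _)) hZpos
  have hstar_sum : ∑ y, πstar y = 1 := by
    simp only [hπstar]
    rw [← Finset.sum_div, ← hZ, div_self hZpos.ne']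
  have key : ∀ p : Y → ℝ, (∀ y, 0 ≤ p y) → ∑ y, p y = 1 →
      J p = τ * Real.log Z - τ * ∑ y, p y * Real.log (p y / πstar y) := by
    intro p hp hps
    rw [hJ]
    have hterm : ∀ y, p y * r y - τ * (p y * Real.log (p y / πref y))
        = τ * Real.log Z * p y - τ * (p y * Real.log (p y / πstar y)) := by
      intro y
      rcases eq_or_lt_of_le (hp y) with h0 | h0
      · simp [← h0]
      · have hr : r y = τ * (Real.log (πstar y) + Real.log Z - Real.log (πref y)) := by
          have h1 : πstar y * Z = πref y * Real.exp (r y / τ) := by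
            rw [hπstar]; field_simp
          have h2 : Real.log (πstar y) + Real.log Z
              = Real.log (πref y) + r y / τ := by
            rw [← Real.log_mul (hstar_pos y).ne' hZpos.ne', h1,
              Real.log_mul (hπref_pos y).ne' (Real.exp_pos _).ne', Real.log_exp]
          rw [h2]
          field_simp
          ring
        rw [Real.log_div h0.ne' (hπref_pos y).ne',
            Real.log_div h0.ne' (hstar_pos y).ne', hr]
        ring
    rw [Finset.mul_sum, ← Finset.sum_sub_distrib,
      Finset.sum_congr rfl (fun y _ => hterm y),
      Finset.sum_sub_distrib, ← Finset.mul_sum, ← Finset.mul_sum, hps, mul_one]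
  have hKL : 0 ≤ ∑ y, π y * Real.log (π y / πstar y) := by
    have hterm : ∀ y, π y - πstar y ≤ π y * Real.log (π y / πstar y) := by
      intro y
      rcases eq_or_lt_of_le (hπ_nonneg y) with h0 | h0
      · simp [← h0]
        exact (hstar_pos y).le
      · have h := Real.log_le_sub_one_of_pos (div_pos (hstar_pos y) h0)
        have hneg : Real.log (πstar y / π y) = - Real.log (π y / πstar y) := by
          rw [← Real.log_inv, inv_div]
        rw [hneg] at h
        have h2 : 1 - πstar y / π y ≤ Real.log (π y / πstar y) := by linarith
        calc π y - πstar y = π y * (1 - πstar y / π y) := by field_simp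
          _ ≤ π y * Real.log (π y / πstar y) :=
            mul_le_mul_of_nonneg_left h2 h0.le
    calc (0:ℝ) = ∑ y, (π y - πstar y) := by
          rw [Finset.sum_sub_distrib, hπ_sum, hstar_sum]; ring
      _ ≤ _ := Finset.sum_le_sum (fun y _ => hterm y)
  rw [key π hπ_nonneg hπ_sum, key πstar (fun y => (hstar_pos y).le) hstar_sum]
  have h0 : ∑ y, πstar y * Real.log (πstar y / πstar y) = 0 := by
    simp [div_self (hstar_pos _).ne']
  rw [h0]
  have := mul_nonneg hτ.le hKL
  linarith
end

section
/- For every y ∈ Y, the induced policy of MOSAIC converges pointwise: lim_{M→∞} π_{r,M}(y) = π_ref(y)·exp(r(y)/τ) / ( ∑_{y'∈Y} π_ref(y')·exp(r(y')/τ) ). -/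
lemma mosaic_sum_pi_prod {Y : Type*} [Fintype Y] [DecidableEq Y] {M : ℕ} (g : Fin M → Y → ℝ) :
    ∑ s : Fin M → Y, ∏ j, g j (s j) = ∏ j, ∑ a, g j a := by
  rw [Finset.prod_univ_sum (fun _ => Finset.univ) g, Fintype.piFinset_univ]

lemma mosaic_exp_prod {Y : Type*} [Fintype Y] [DecidableEq Y] {M : ℕ} (q : Y → ℝ)
    (h : Fin M → Y → ℝ) :
    ∑ s : Fin M → Y, (∏ j, q (s j)) * ∏ j, h j (s j) = ∏ j, ∑ a, q a * h j a := by
  rw [← mosaic_sum_pi_prod (fun j a => q a * h j a)]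
  exact Finset.sum_congr rfl fun s _ => (Finset.prod_mul_distrib).symm

lemma mosaic_exp_single {Y : Type*} [Fintype Y] [DecidableEq Y] {M : ℕ} (q : Y → ℝ)
    (hq : ∑ a, q a = 1) (j0 : Fin M) (f : Y → ℝ) :
    ∑ s : Fin M → Y, (∏ j, q (s j)) * f (s j0) = ∑ a, q a * f a := by
  have h := mosaic_exp_prod q (fun j a => if j = j0 then f a else 1)
  have hL : ∀ s : Fin M → Y, (∏ j, if j = j0 then f (s j) else 1) = f (s j0) := by
    intro s
    rw [Finset.prod_ite_eq' Finset.univ j0 (fun j => f (s j))]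
    simp
  have hR : (∏ j : Fin M, ∑ a, q a * (if j = j0 then f a else 1)) = ∑ a, q a * f a := by
    have : ∀ j : Fin M, (∑ a, q a * (if j = j0 then f a else 1))
        = if j = j0 then (∑ a, q a * f a) else 1 := by
      intro j
      by_cases hj : j = j0 <;> simp [hj, hq]
    rw [Finset.prod_congr rfl fun j _ => this j,
      Finset.prod_ite_eq' Finset.univ j0 (fun _ => ∑ a, q a * f a)]
    simp
  rw [← hR, ← h]
  exact Finset.sum_congr rfl fun s _ => by rw [hL s]

lemma mosaic_exp_pair {Y : Type*} [Fintype Y] [DecidableEq Y] {M : ℕ} (q : Y → ℝ)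
    (hq : ∑ a, q a = 1) {j k : Fin M} (hjk : j ≠ k) (F G : Y → ℝ) :
    ∑ s : Fin M → Y, (∏ i, q (s i)) * (F (s j) * G (s k))
      = (∑ a, q a * F a) * (∑ a, q a * G a) := by
  have h := mosaic_exp_prod q
    (fun i a => (if i = j then F a else 1) * (if i = k then G a else 1))
  have hL : ∀ s : Fin M → Y,
      (∏ i, (if i = j then F (s i) else 1) * (if i = k then G (s i) else 1))
        = F (s j) * G (s k) := by
    intro s
    rw [Finset.prod_mul_distrib, Finset.prod_ite_eq' Finset.univ j (fun i => F (s i)),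
      Finset.prod_ite_eq' Finset.univ k (fun i => G (s i))]
    simp
  have hR : (∏ i : Fin M, ∑ a, q a * ((if i = j then F a else 1) * (if i = k then G a else 1)))
      = (∑ a, q a * F a) * (∑ a, q a * G a) := by
    have h1 : ∀ i : Fin M, (∑ a, q a * ((if i = j then F a else 1) * (if i = k then G a else 1)))
        = (if i = j then (∑ a, q a * F a) else 1) * (if i = k then (∑ a, q a * G a) else 1) := by
      intro i
      by_cases h1 : i = j
      · subst h1; simp [hjk, hq]
      · by_cases h2 : i = k <;> simp [h1, h2, hq, Ne.symm hjk]
    rw [Finset.prod_congr rfl fun i _ => h1 i, Finset.prod_mul_distrib,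
      Finset.prod_ite_eq' Finset.univ j (fun _ => ∑ a, q a * F a),
      Finset.prod_ite_eq' Finset.univ k (fun _ => ∑ a, q a * G a)]
    simp
  rw [← hR, ← h]
  exact Finset.sum_congr rfl fun s _ => by rw [hL s]

lemma mosaic_div_bound {a1 a0 b1 b0 wmin : ℝ} (hwmin : 0 < wmin)
    (hb1 : wmin ≤ b1) (hb0 : wmin ≤ b0) (ha0 : 0 ≤ a0) (ha0b0 : a0 ≤ b0) :
    |a1 / b1 - a0 / b0| ≤ (|a1 - a0| + |b1 - b0|) / wmin := by
  have hb1' : 0 < b1 := hwmin.trans_le hb1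
  have hb0' : 0 < b0 := hwmin.trans_le hb0
  rw [div_sub_div _ _ hb1'.ne' hb0'.ne', abs_div, abs_of_pos (mul_pos hb1' hb0'),
    div_le_div_iff₀ (mul_pos hb1' hb0') hwmin]
  have h1 : a1 * b0 - b1 * a0 = (a1 - a0) * b0 - (b1 - b0) * a0 := by ring
  have h2 : |a1 * b0 - b1 * a0| ≤ |a1 - a0| * b0 + |b1 - b0| * a0 := by
    rw [h1]
    refine (abs_sub _ _).trans ?_
    rw [abs_mul, abs_mul, abs_of_pos hb0', abs_of_nonneg ha0]
  have k1 : |a1 - a0| * b0 * wmin ≤ |a1 - a0| * (b1 * b0) := by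
    have := mul_le_mul_of_nonneg_left hb1 (mul_nonneg (abs_nonneg (a1 - a0)) hb0'.le)
    nlinarith
  have k2 : |b1 - b0| * a0 * wmin ≤ |b1 - b0| * (b1 * b0) := by
    have h3 : a0 * wmin ≤ b0 * b1 := by nlinarith
    have := mul_le_mul_of_nonneg_left h3 (abs_nonneg (b1 - b0))
    nlinarith
  nlinarith [abs_nonneg (a1 - a0), abs_nonneg (b1 - b0)]

lemma mosaic_key {Y : Type*} [Fintype Y] [DecidableEq Y]
    (q w : Y → ℝ) (hq_pos : ∀ a, 0 < q a) (hq_sum : ∑ a, q a = 1)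
    (hw_pos : ∀ a, 0 < w a) (wmin wmax : ℝ) (hwmin_pos : 0 < wmin)
    (hwmin : ∀ a, wmin ≤ w a) (hwmax : ∀ a, w a ≤ wmax) (y : Y)
    (M : ℕ) (hM : 1 ≤ M) :
    |(∑ s : Fin M → Y, (∏ j, q (s j)) *
        (∑ j, if s j = y then w (s j) / (∑ k, w (s k)) else 0)) -
      q y * w y / (∑ a, q a * w a)| ≤
    (2 * wmax / wmin) * (Fintype.card Y) * Real.sqrt (1 / M) := by
  have hM0 : (0:ℝ) < M := by exact_mod_cast hM
  have hwmax_pos : 0 < wmax := (hw_pos y).trans_le (hwmax y)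
  have hFinM : Nonempty (Fin M) := ⟨⟨0, hM⟩⟩
  set u : Y → (Fin M → Y) → ℝ := fun a s => (∑ j, if s j = a then (1:ℝ) else 0) / M with hu
  set P : (Fin M → Y) → ℝ := fun s => ∏ j, q (s j) with hP
  have hP_nonneg : ∀ s, 0 ≤ P s := fun s => Finset.prod_nonneg fun j _ => (hq_pos _).le
  have hP_sum : ∑ s : Fin M → Y, P s = 1 := by
    have h := mosaic_sum_pi_prod (M := M) (fun _ a => q a)
    simpa [hq_sum, hP] using h
  have hu_nonneg : ∀ a s, 0 ≤ u a s := fun a s => by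
    apply div_nonneg _ hM0.le
    exact Finset.sum_nonneg fun j _ => by split <;> norm_num
  have hcount : ∀ s : Fin M → Y, ∑ a, ∑ j, (if s j = a then (1:ℝ) else 0) = M := fun s => by
    rw [Finset.sum_comm]
    simp [Finset.sum_ite_eq]
  have hu_sum : ∀ s, ∑ a, u a s = 1 := fun s => by
    simp only [hu]
    rw [← Finset.sum_div, hcount s, div_self hM0.ne']
  have hZ_ge : wmin ≤ ∑ a, q a * w a := by
    calc wmin = ∑ a, q a * wmin := by rw [← Finset.sum_mul, hq_sum, one_mul]
    _ ≤ ∑ a, q a * w a :=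
      Finset.sum_le_sum fun a _ => mul_le_mul_of_nonneg_left (hwmin a) (hq_pos a).le
  have ha0_le : q y * w y ≤ ∑ a, q a * w a :=
    Finset.single_le_sum (fun a _ => (mul_pos (hq_pos a) (hw_pos a)).le) (Finset.mem_univ y)
  have hb1_ge : ∀ s, wmin ≤ ∑ a, u a s * w a := fun s => by
    calc wmin = ∑ a, u a s * wmin := by rw [← Finset.sum_mul, hu_sum s, one_mul]
    _ ≤ ∑ a, u a s * w a :=
      Finset.sum_le_sum fun a _ => mul_le_mul_of_nonneg_left (hwmin a) (hu_nonneg a s)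
  -- rewrite inner sum
  have hinner : ∀ s : Fin M → Y,
      (∑ j, if s j = y then w (s j) / (∑ k, w (s k)) else 0)
        = (u y s * w y) / (∑ a, u a s * w a) := by
    intro s
    have hDpos : 0 < ∑ k, w (s k) :=
      Finset.sum_pos (fun k _ => hw_pos _) Finset.univ_nonempty
    have hD : (∑ a, (∑ j, if s j = a then (1:ℝ) else 0) * w a) = ∑ k, w (s k) := by
      simp only [Finset.sum_mul, ite_mul, one_mul, zero_mul]
      rw [Finset.sum_comm]
      exact Finset.sum_congr rfl fun j _ => by rw [Finset.sum_ite_eq]; simp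
    have hnum : (∑ j, if s j = y then w (s j) / (∑ k, w (s k)) else 0)
        = ((∑ j, if s j = y then (1:ℝ) else 0) * w y) / (∑ k, w (s k)) := by
      rw [Finset.sum_mul, Finset.sum_div]
      refine Finset.sum_congr rfl fun j _ => ?_
      by_cases h : s j = y <;> simp [h]
    have hden : (∑ a, u a s * w a)
        = (∑ a, (∑ j, if s j = a then (1:ℝ) else 0) * w a) / M := by
      simp only [hu]
      rw [Finset.sum_div]
      exact Finset.sum_congr rfl fun a _ => by rw [div_mul_eq_mul_div]
    rw [hnum, hden, hD]
    simp only [hu]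
    rw [eq_comm]
    field_simp
  -- pointwise Lipschitz bound
  set Z := ∑ a, q a * w a with hZ
  set C := 2 * wmax / wmin with hC
  have hC_nonneg : 0 ≤ C := by positivity
  have habs : ∀ s, |u y s * w y / (∑ a, u a s * w a) - q y * w y / Z|
      ≤ C * ∑ a, |u a s - q a| := by
    intro s
    have h1 := mosaic_div_bound (a1 := u y s * w y) (a0 := q y * w y)
      hwmin_pos (hb1_ge s) hZ_ge (mul_pos (hq_pos y) (hw_pos y)).le ha0_le
    refine h1.trans ?_
    set S := ∑ a, |u a s - q a| with hS
    have hS_nonneg : 0 ≤ S := Finset.sum_nonneg fun a _ => abs_nonneg _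
    have hA : |u y s * w y - q y * w y| ≤ wmax * S := by
      rw [← sub_mul, abs_mul, abs_of_pos (hw_pos y)]
      calc |u y s - q y| * w y ≤ |u y s - q y| * wmax :=
            mul_le_mul_of_nonneg_left (hwmax y) (abs_nonneg _)
        _ ≤ S * wmax := by
            rw [hS]
            exact mul_le_mul_of_nonneg_right
              (Finset.single_le_sum (fun a _ => abs_nonneg (u a s - q a)) (Finset.mem_univ y))
              hwmax_pos.le
        _ = wmax * S := mul_comm _ _
    have hB : |(∑ a, u a s * w a) - Z| ≤ wmax * S := by
      have e1 : (∑ a, u a s * w a) - Z = ∑ a, (u a s - q a) * w a := by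
        rw [hZ, ← Finset.sum_sub_distrib]
        exact Finset.sum_congr rfl fun a _ => by ring
      rw [e1]
      calc |∑ a, (u a s - q a) * w a| ≤ ∑ a, |(u a s - q a) * w a| :=
            Finset.abs_sum_le_sum_abs _ _
        _ ≤ ∑ a, |u a s - q a| * wmax := Finset.sum_le_sum fun a _ => by
            rw [abs_mul, abs_of_pos (hw_pos a)]
            exact mul_le_mul_of_nonneg_left (hwmax a) (abs_nonneg _)
        _ = wmax * S := by rw [← Finset.sum_mul, mul_comm]
    calc (|u y s * w y - q y * w y| + |(∑ a, u a s * w a) - Z|) / wmin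
        ≤ (wmax * S + wmax * S) / wmin := by
          gcongr
      _ = C * S := by rw [hC]; ring
  -- expectation bound
  have hmain : |(∑ s : Fin M → Y, P s * (u y s * w y / (∑ a, u a s * w a))) - q y * w y / Z|
      ≤ C * ∑ a, ∑ s : Fin M → Y, P s * |u a s - q a| := by
    have h0 : (∑ s : Fin M → Y, P s * (u y s * w y / (∑ a, u a s * w a))) - q y * w y / Z
        = ∑ s : Fin M → Y, P s * (u y s * w y / (∑ a, u a s * w a) - q y * w y / Z) := by
      simp only [mul_sub, Finset.sum_sub_distrib, ← Finset.sum_mul, hP_sum, one_mul]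
    rw [h0]
    calc |∑ s : Fin M → Y, P s * (u y s * w y / (∑ a, u a s * w a) - q y * w y / Z)|
        ≤ ∑ s : Fin M → Y, |P s * (u y s * w y / (∑ a, u a s * w a) - q y * w y / Z)| :=
          Finset.abs_sum_le_sum_abs _ _
      _ = ∑ s : Fin M → Y, P s * |u y s * w y / (∑ a, u a s * w a) - q y * w y / Z| := by
          exact Finset.sum_congr rfl fun s _ => by
            rw [abs_mul, abs_of_nonneg (hP_nonneg s)]
      _ ≤ ∑ s : Fin M → Y, P s * (C * ∑ a, |u a s - q a|) :=
          Finset.sum_le_sum fun s _ => mul_le_mul_of_nonneg_left (habs s) (hP_nonneg s)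
      _ = C * ∑ s : Fin M → Y, ∑ a, P s * |u a s - q a| := by
          simp only [Finset.mul_sum]
          exact Finset.sum_congr rfl fun s _ => Finset.sum_congr rfl fun a _ => by ring
      _ = C * ∑ a, ∑ s : Fin M → Y, P s * |u a s - q a| := by rw [Finset.sum_comm]
  -- second moment bound
  have hq_le_one : ∀ x, q x ≤ 1 := fun x => by
    rw [← hq_sum]
    exact Finset.single_le_sum (fun i _ => (hq_pos i).le) (Finset.mem_univ x)
  have hsecond : ∀ a, ∑ s : Fin M → Y, P s * (u a s - q a) ^ 2 ≤ 1 / M := by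
    intro a
    set F : Y → ℝ := fun x => (if x = a then (1:ℝ) else 0) - q a with hF
    have hFmu : ∑ x, q x * F x = 0 := by
      have e : ∀ x, q x * F x = (if x = a then q x else 0) - q x * q a := by
        intro x
        simp only [hF]
        by_cases h : x = a <;> simp [h] <;> ring
      rw [Finset.sum_congr rfl fun x _ => e x, Finset.sum_sub_distrib,
        Finset.sum_ite_eq' Finset.univ a q, ← Finset.sum_mul, hq_sum]
      simp
    have hFsq : ∑ x, q x * (F x * F x) ≤ 1 := by
      calc ∑ x, q x * (F x * F x) ≤ ∑ x, q x * 1 := by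
            refine Finset.sum_le_sum fun x _ => mul_le_mul_of_nonneg_left ?_ (hq_pos x).le
            have h1 : 0 < q a := hq_pos a
            have h2 : q a ≤ 1 := hq_le_one a
            simp only [hF]
            split <;> nlinarith
        _ = 1 := by simpa using hq_sum
    have hudiff : ∀ s : Fin M → Y, u a s - q a = (1 / M : ℝ) * ∑ j, F (s j) := by
      intro s
      simp only [hF, Finset.sum_sub_distrib, Finset.sum_const, Finset.card_univ,
        Fintype.card_fin, nsmul_eq_mul, hu]
      field_simp
    have h1 : ∀ s : Fin M → Y, P s * (u a s - q a) ^ 2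
        = (1 / M : ℝ) ^ 2 * ∑ j, ∑ k, P s * (F (s j) * F (s k)) := by
      intro s
      rw [hudiff s, mul_pow, pow_two (∑ j, F (s j)), Finset.sum_mul_sum]
      simp only [Finset.mul_sum]
      exact Finset.sum_congr rfl fun j _ => Finset.sum_congr rfl fun k _ => by ring
    have h2 : ∑ s : Fin M → Y, P s * (u a s - q a) ^ 2
        = (1 / M : ℝ) ^ 2 * ∑ j : Fin M, ∑ k : Fin M,
            ∑ s : Fin M → Y, P s * (F (s j) * F (s k)) := by
      rw [Finset.sum_congr rfl fun s _ => h1 s, ← Finset.mul_sum]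
      congr 1
      rw [Finset.sum_comm]
      refine Finset.sum_congr rfl fun j _ => ?_
      rw [Finset.sum_comm]
    have h3 : ∀ j k : Fin M, (∑ s : Fin M → Y, P s * (F (s j) * F (s k)))
        = if j = k then ∑ x, q x * (F x * F x) else 0 := by
      intro j k
      by_cases hjk : j = k
      · subst hjk
        rw [if_pos rfl]
        exact mosaic_exp_single q hq_sum j (fun x => F x * F x)
      · rw [if_neg hjk, mosaic_exp_pair q hq_sum hjk F F, hFmu, mul_zero]
    rw [h2, Finset.sum_congr rfl fun j _ => Finset.sum_congr rfl fun k _ => h3 j k]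
    have h4 : (∑ j : Fin M, ∑ k : Fin M, if j = k then ∑ x, q x * (F x * F x) else 0)
        = M * ∑ x, q x * (F x * F x) := by
      rw [Finset.sum_congr rfl fun j _ => Finset.sum_ite_eq Finset.univ j
        (fun _ => ∑ x, q x * (F x * F x))]
      simp [mul_comm]
    rw [h4]
    rw [div_pow, one_pow]
    calc 1 / (M:ℝ) ^ 2 * ((M:ℝ) * ∑ x, q x * (F x * F x))
        ≤ 1 / (M:ℝ) ^ 2 * ((M:ℝ) * 1) :=
          mul_le_mul_of_nonneg_left (mul_le_mul_of_nonneg_left hFsq hM0.le) (by positivity)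
      _ = 1 / (M:ℝ) := by
          rw [mul_one, pow_two, one_div, mul_inv, mul_assoc, inv_mul_cancel₀ hM0.ne',
            mul_one, one_div]
  -- Cauchy-Schwarz
  have hfirst : ∀ a, ∑ s : Fin M → Y, P s * |u a s - q a| ≤ Real.sqrt (1 / M) := by
    intro a
    have hnn : 0 ≤ ∑ s : Fin M → Y, P s * |u a s - q a| :=
      Finset.sum_nonneg fun s _ => mul_nonneg (hP_nonneg s) (abs_nonneg _)
    rw [Real.le_sqrt hnn (by positivity)]
    have cs := Finset.sum_mul_sq_le_sq_mul_sq Finset.univ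
      (fun s : Fin M → Y => Real.sqrt (P s) * |u a s - q a|)
      (fun s : Fin M → Y => Real.sqrt (P s))
    have e1 : ∀ s : Fin M → Y,
        (Real.sqrt (P s) * |u a s - q a|) * Real.sqrt (P s) = P s * |u a s - q a| := by
      intro s
      rw [mul_comm, ← mul_assoc, Real.mul_self_sqrt (hP_nonneg s), mul_comm]
    have e2 : ∀ s : Fin M → Y,
        (Real.sqrt (P s) * |u a s - q a|) ^ 2 = P s * (u a s - q a) ^ 2 := by
      intro s
      rw [mul_pow, Real.sq_sqrt (hP_nonneg s), sq_abs]
    have e3 : ∀ s : Fin M → Y, Real.sqrt (P s) ^ 2 = P s := fun s => Real.sq_sqrt (hP_nonneg s)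
    rw [Finset.sum_congr rfl fun s _ => e1 s, Finset.sum_congr rfl fun s _ => e2 s,
      Finset.sum_congr rfl fun s _ => e3 s, hP_sum, mul_one] at cs
    exact cs.trans (hsecond a)
  -- finish
  have hfin : (∑ s : Fin M → Y, P s *
      (∑ j, if s j = y then w (s j) / (∑ k, w (s k)) else 0))
      = ∑ s : Fin M → Y, P s * (u y s * w y / (∑ a, u a s * w a)) :=
    Finset.sum_congr rfl fun s _ => by rw [hinner s]
  calc |(∑ s : Fin M → Y, (∏ j, q (s j)) *
        (∑ j, if s j = y then w (s j) / (∑ k, w (s k)) else 0)) - q y * w y / Z|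
      = |(∑ s : Fin M → Y, P s * (u y s * w y / (∑ a, u a s * w a))) - q y * w y / Z| := by
        rw [← hfin]
    _ ≤ C * ∑ a, ∑ s : Fin M → Y, P s * |u a s - q a| := hmain
    _ ≤ C * ∑ a : Y, Real.sqrt (1 / M) := by
        refine mul_le_mul_of_nonneg_left ?_ hC_nonneg
        exact Finset.sum_le_sum fun a _ => hfirst a
    _ = C * (Fintype.card Y) * Real.sqrt (1 / M) := by
        rw [Finset.sum_const, Finset.card_univ, nsmul_eq_mul, mul_assoc]
    _ = (2 * wmax / wmin) * (Fintype.card Y) * Real.sqrt (1 / M) := by rw [hC]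


/-- The induced policy of MOSAIC converges pointwise to the
Gibbs distribution as the number of candidate replies `M` tends to infinity. -/
theorem mosaic_policy_converges_pointwise
    {Y : Type*} [Fintype Y] [Nonempty Y] [DecidableEq Y]
    (πref q : Y → ℝ)
    (hπref_pos : ∀ y, 0 < πref y) (hπref_sum : ∑ y, πref y = 1)
    (hq_pos : ∀ y, 0 < q y) (hq_sum : ∑ y, q y = 1)
    (r : Y → ℝ) (τ : ℝ) (hτ : 0 < τ)
    (w : Y → ℝ) (hw : ∀ y, w y = πref y * Real.exp (r y / τ) / q y)
    (πM : ℕ → Y → ℝ)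
    (hπM : ∀ (M : ℕ) (y : Y), πM M y =
      ∑ s : Fin M → Y, (∏ j, q (s j)) *
        (∑ j, if s j = y then w (s j) / (∑ k, w (s k)) else 0))
    (y : Y) :
    Filter.Tendsto (fun M => πM M y) Filter.atTop
      (nhds (πref y * Real.exp (r y / τ) /
        (∑ y', πref y' * Real.exp (r y' / τ)))) := by
  have hw_pos : ∀ a, 0 < w a := fun a => by
    rw [hw]
    exact div_pos (mul_pos (hπref_pos a) (Real.exp_pos _)) (hq_pos a)
  have hqw : ∀ a, q a * w a = πref a * Real.exp (r a / τ) := fun a => by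
    rw [hw, mul_div_assoc', mul_comm, mul_div_assoc, div_self (hq_pos a).ne', mul_one]
  obtain ⟨y₀, -, hy₀⟩ := Finset.exists_min_image Finset.univ w ⟨y, Finset.mem_univ y⟩
  obtain ⟨y₁, -, hy₁⟩ := Finset.exists_max_image Finset.univ w ⟨y, Finset.mem_univ y⟩
  have hTeq : πref y * Real.exp (r y / τ) / (∑ y', πref y' * Real.exp (r y' / τ))
      = q y * w y / (∑ a, q a * w a) := by
    rw [hqw y]
    congr 1
    exact (Finset.sum_congr rfl fun a _ => (hqw a)).symm
  rw [hTeq, ← tendsto_sub_nhds_zero_iff]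
  have hsqrt : Filter.Tendsto (fun M : ℕ => Real.sqrt M) Filter.atTop Filter.atTop := by
    apply Filter.tendsto_atTop_atTop.mpr
    intro b
    refine ⟨⌈b ^ 2⌉₊, fun M hM => ?_⟩
    calc b ≤ |b| := le_abs_self b
      _ = Real.sqrt (b ^ 2) := (Real.sqrt_sq_eq_abs b).symm
      _ ≤ Real.sqrt M := by
          apply Real.sqrt_le_sqrt
          calc b ^ 2 ≤ (⌈b ^ 2⌉₊ : ℝ) := Nat.le_ceil _
            _ ≤ M := by exact_mod_cast hM
  have hlim : Filter.Tendsto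
      (fun M : ℕ => (2 * w y₁ / w y₀) * (Fintype.card Y) * Real.sqrt (1 / M))
      Filter.atTop (nhds 0) := by
    have h1 : ∀ M : ℕ, (2 * w y₁ / w y₀) * (Fintype.card Y) * Real.sqrt (1 / M)
        = (2 * w y₁ / w y₀ * (Fintype.card Y)) * (Real.sqrt M)⁻¹ := by
      intro M
      rw [one_div, Real.sqrt_inv]
    simp only [h1]
    simpa using hsqrt.inv_tendsto_atTop.const_mul (2 * w y₁ / w y₀ * (Fintype.card Y))
  apply squeeze_zero_norm' _ hlim
  filter_upwards [Filter.eventually_ge_atTop 1] with M hM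
  rw [Real.norm_eq_abs, hπM]
  exact mosaic_key q w hq_pos hq_sum hw_pos (w y₀) (w y₁) (hw_pos y₀)
    (fun a => hy₀ a (Finset.mem_univ a)) (fun a => hy₁ a (Finset.mem_univ a)) y M hM
end

section
/- The pointwise limit π*_r(y) := lim_{M→∞} π_{r,M}(y) exists for every y ∈ Y, is a probability mass function on Y, and maximizes the platform objective over probability mass functions: for every probability mass function π on Y, ∑_{y∈Y} π(y)·r(y) − τ·∑_{y∈Y} π(y)·log(π(y)/π_ref(y)) ≤ ∑_{y∈Y} π*_r(y)·r(y) − τ·∑_{y∈Y} π*_r(y)·log(π*_r(y)/π_ref(y)) (with the convention 0·log 0 = 0). -/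
set_option linter.unusedSectionVars false
set_option linter.unusedVariables false
set_option maxHeartbeats 1000000

open Finset Filter

section MosaicAux
variable {Y : Type*} [Fintype Y] [Nonempty Y] [DecidableEq Y]


lemma mosaic_sum_prod {m : ℕ} (g : Fin m → Y → ℝ) :
    ∑ t : Fin m → Y, ∏ i, g i (t i) = ∏ i, ∑ a, g i a :=
  (Fintype.prod_sum g).symm

lemma mosaic_norm {m : ℕ} {q : Y → ℝ} (hq : ∑ a, q a = 1) :
    ∑ t : Fin m → Y, ∏ i, q (t i) = 1 := by
  rw [mosaic_sum_prod (fun _ a => q a)]; simp [hq]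

lemma mosaic_marginal {m : ℕ} {q : Y → ℝ} (hq : ∑ a, q a = 1) (f : Y → ℝ) (j : Fin m) :
    ∑ t : Fin m → Y, (∏ i, q (t i)) * f (t j) = ∑ a, q a * f a := by
  have h1 : ∀ t : Fin m → Y, (∏ i, q (t i)) * f (t j)
      = ∏ i, (q (t i) * (if i = j then f (t i) else 1)) := by
    intro t
    rw [prod_mul_distrib, Finset.prod_ite_eq' univ j (fun i => f (t i))]
    simp
  simp only [h1]
  rw [mosaic_sum_prod (fun i a => q a * (if i = j then f a else 1))]
  have h2 : ∀ i : Fin m, (∑ a, q a * (if i = j then f a else 1))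
      = (if i = j then (∑ a, q a * f a) else 1) := by
    intro i; split <;> simp [hq]
  simp only [h2]
  rw [Finset.prod_ite_eq' univ j (fun _ => ∑ a, q a * f a)]
  simp

lemma mosaic_pair {m : ℕ} {q : Y → ℝ} (hq : ∑ a, q a = 1) (f g : Y → ℝ) {j k : Fin m}
    (hjk : j ≠ k) :
    ∑ t : Fin m → Y, (∏ i, q (t i)) * (f (t j) * g (t k)) =
      (∑ a, q a * f a) * (∑ a, q a * g a) := by
  have h1 : ∀ t : Fin m → Y, (∏ i, q (t i)) * (f (t j) * g (t k))
      = ∏ i, (q (t i) * ((if i = j then f (t i) else 1) * (if i = k then g (t i) else 1))) := by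
    intro t
    rw [prod_mul_distrib, prod_mul_distrib, Finset.prod_ite_eq' univ j (fun i => f (t i)),
      Finset.prod_ite_eq' univ k (fun i => g (t i))]
    simp [mul_assoc]
  simp only [h1]
  rw [mosaic_sum_prod (fun i a => q a * ((if i = j then f a else 1) * (if i = k then g a else 1)))]
  have h2 : ∀ i : Fin m, (∑ a, q a * ((if i = j then f a else 1) * (if i = k then g a else 1)))
      = (if i = j then (∑ a, q a * f a) else 1) * (if i = k then (∑ a, q a * g a) else 1) := by
    intro i
    rcases eq_or_ne i j with rfl | hij
    · simp [hjk, hq]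
    · rcases eq_or_ne i k with rfl | hik
      · simp [hij, hq]
      · simp [hij, hik, hq]
  simp only [h2]
  rw [prod_mul_distrib, Finset.prod_ite_eq' univ j (fun _ => ∑ a, q a * f a),
    Finset.prod_ite_eq' univ k (fun _ => ∑ a, q a * g a)]
  simp

lemma mosaic_ES {m : ℕ} {q w : Y → ℝ} (hq : ∑ a, q a = 1) :
    ∑ t : Fin m → Y, (∏ i, q (t i)) * (∑ k, w (t k)) = m * ∑ a, q a * w a := by
  simp only [Finset.mul_sum]
  rw [Finset.sum_comm]
  have : ∀ j : Fin m, ∑ t : Fin m → Y, (∏ i, q (t i)) * w (t j) = ∑ a, q a * w a :=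
    fun j => mosaic_marginal hq w j
  simp [this, Finset.mul_sum]

lemma mosaic_ES2 {m : ℕ} {q w : Y → ℝ} (hq : ∑ a, q a = 1) :
    ∑ t : Fin m → Y, (∏ i, q (t i)) * (∑ k, w (t k))^2
      = m * m * (∑ a, q a * w a)^2
        + m * ((∑ a, q a * (w a * w a)) - (∑ a, q a * w a)^2) := by
  have expand : ∀ t : Fin m → Y, (∏ i, q (t i)) * (∑ k, w (t k))^2
      = ∑ j : Fin m, ∑ k : Fin m, (∏ i, q (t i)) * (w (t j) * w (t k)) := by
    intro t
    rw [sq, Finset.sum_mul_sum]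
    simp [Finset.mul_sum]
  simp only [expand]
  rw [Finset.sum_comm]
  have inner : ∀ j : Fin m, ∑ t : Fin m → Y, ∑ k : Fin m, (∏ i, q (t i)) * (w (t j) * w (t k))
      = ∑ k : Fin m, ∑ t : Fin m → Y, (∏ i, q (t i)) * (w (t j) * w (t k)) := fun j =>
    Finset.sum_comm
  simp only [inner]
  have hval : ∀ j k : Fin m, ∑ t : Fin m → Y, (∏ i, q (t i)) * (w (t j) * w (t k))
      = if j = k then (∑ a, q a * (w a * w a)) else (∑ a, q a * w a)^2 := by
    intro j k
    rcases eq_or_ne j k with rfl | hjk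
    · simp only [if_pos rfl]
      exact mosaic_marginal hq (fun a => w a * w a) j
    · rw [if_neg hjk, sq]
      exact mosaic_pair hq w w hjk
  simp only [hval]
  have split : ∀ j k : Fin m, (if j = k then (∑ a, q a * (w a * w a)) else (∑ a, q a * w a)^2)
      = (∑ a, q a * w a)^2
        + (if j = k then ((∑ a, q a * (w a * w a)) - (∑ a, q a * w a)^2) else 0) := by
    intro j k; split <;> ring
  simp only [split, Finset.sum_add_distrib, Finset.sum_ite_eq, Finset.mem_univ, if_true,
    Finset.sum_const, Finset.card_univ, Fintype.card_fin, nsmul_eq_mul]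
  ring

lemma mosaic_var {m : ℕ} {q w : Y → ℝ} (hq : ∑ a, q a = 1) :
    ∑ t : Fin m → Y, (∏ i, q (t i)) * ((∑ k, w (t k)) - m * (∑ a, q a * w a))^2
      ≤ m * ∑ a, q a * (w a * w a) := by
  set Z := ∑ a, q a * w a with hZ
  set V := ∑ a, q a * (w a * w a) with hV
  have expand : ∀ t : Fin m → Y, (∏ i, q (t i)) * ((∑ k, w (t k)) - m * Z)^2
      = (∏ i, q (t i)) * (∑ k, w (t k))^2
        - (2 * (m * Z)) * ((∏ i, q (t i)) * (∑ k, w (t k)))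
        + (m * Z)^2 * (∏ i, q (t i)) := by
    intro t; ring
  simp only [expand]
  rw [Finset.sum_add_distrib, Finset.sum_sub_distrib, ← Finset.mul_sum, ← Finset.mul_sum,
    mosaic_ES2 hq, mosaic_ES hq, mosaic_norm hq]
  rw [← hZ, ← hV]
  have h1 : (0:ℝ) ≤ (m:ℝ) * Z^2 := by positivity
  nlinarith [h1]



lemma mosaic_step {q w : Y → ℝ} (y : Y) (m : ℕ) :
    ∑ s : Fin (m+1) → Y, (∏ i, q (s i)) *
        (∑ j, if s j = y then w (s j) / (∑ k, w (s k)) else 0)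
      = ((m:ℝ)+1) * (q y * ∑ t : Fin m → Y, (∏ i, q (t i)) *
          (w y / (w y + ∑ k, w (t k)))) := by
  have key : ∀ j : Fin (m+1),
      (∑ s : Fin (m+1) → Y, (∏ i, q (s i)) *
        (if s j = y then w (s j) / (∑ k, w (s k)) else 0))
      = q y * ∑ t : Fin m → Y, (∏ i, q (t i)) * (w y / (w y + ∑ k, w (t k))) := by
    intro j
    rw [← Equiv.sum_comp (Fin.insertNthEquiv (fun _ => Y) j)
      (fun s : Fin (m+1) → Y => (∏ i, q (s i)) *
        (if s j = y then w (s j) / (∑ k, w (s k)) else 0))]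
    rw [Fintype.sum_prod_type]
    have hprod : ∀ (a : Y) (t : Fin m → Y),
        (∏ i, q (Fin.insertNth (α := fun _ => Y) j a t i)) = q a * ∏ i, q (t i) := by
      intro a t
      rw [Fin.prod_univ_succAbove (fun i => q (Fin.insertNth (α := fun _ => Y) j a t i)) j]
      simp
    have hsum : ∀ (a : Y) (t : Fin m → Y),
        (∑ k, w (Fin.insertNth (α := fun _ => Y) j a t k)) = w a + ∑ k, w (t k) := by
      intro a t
      rw [Fin.sum_univ_succAbove (fun i => w (Fin.insertNth (α := fun _ => Y) j a t i)) j]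
      simp
    simp only [Fin.insertNthEquiv_apply, hprod, hsum, Fin.insertNth_apply_same]
    have inner : ∀ a : Y,
        (∑ t : Fin m → Y, (q a * ∏ i, q (t i)) *
          (if a = y then w a / (w a + ∑ k, w (t k)) else 0))
        = (if a = y then q y * ∑ t : Fin m → Y, (∏ i, q (t i)) *
            (w y / (w y + ∑ k, w (t k))) else 0) := by
      intro a
      rcases eq_or_ne a y with rfl | hay
      · simp only [if_pos rfl, Finset.mul_sum]
        refine Finset.sum_congr rfl fun t _ => by simp only [if_true]; ring
      · simp [hay]
    simp only [inner]
    simp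
  have hswap : (∑ s : Fin (m+1) → Y, (∏ i, q (s i)) *
        (∑ j, if s j = y then w (s j) / (∑ k, w (s k)) else 0))
      = ∑ j : Fin (m+1), ∑ s : Fin (m+1) → Y, (∏ i, q (s i)) *
        (if s j = y then w (s j) / (∑ k, w (s k)) else 0) := by
    simp only [Finset.mul_sum]
    exact Finset.sum_comm
  rw [hswap]
  simp only [key]
  rw [Finset.sum_const, Finset.card_univ, Fintype.card_fin, nsmul_eq_mul]
  push_cast
  ring

lemma mosaic_limit {q w : Y → ℝ} (hq_pos : ∀ a, 0 < q a) (hq_sum : ∑ a, q a = 1)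
    (hw_pos : ∀ a, 0 < w a) (y : Y) :
    Tendsto (fun m : ℕ => ((m:ℝ)+1) * (q y * ∑ t : Fin m → Y, (∏ i, q (t i)) *
      (w y / (w y + ∑ k, w (t k))))) atTop
      (nhds (q y * w y / (∑ a, q a * w a))) := by
  set a := w y with ha_def
  set Z := ∑ b, q b * w b with hZ_def
  set V := ∑ b, q b * (w b * w b) with hV_def
  set c := univ.inf' univ_nonempty w with hc_def
  have ha : 0 < a := hw_pos y
  have hZ : 0 < Z := Finset.sum_pos (fun i _ => mul_pos (hq_pos i) (hw_pos i)) univ_nonempty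
  have hc : 0 < c := by
    rw [hc_def, Finset.lt_inf'_iff]
    exact fun i _ => hw_pos i
  have hV : 0 ≤ V := Finset.sum_le_sum (fun i _ => le_of_lt (mul_pos (hq_pos i)
    (mul_pos (hw_pos i) (hw_pos i)))) |>.trans_eq' (by simp)
  -- F m
  set F : ℕ → ℝ := fun m => ∑ t : Fin m → Y, (∏ i, q (t i)) * (a + ∑ k, w (t k))⁻¹ with hF_def
  set K : ℝ := 2 * Real.sqrt V / (c * Z) with hK_def
  have hbound : ∀ m : ℕ, 1 ≤ m →
      |((m:ℝ)+1) * F m - ((m:ℝ)+1)/(a + m*Z)| ≤ K / Real.sqrt m := by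
    intro m hm
    have hmr : (1:ℝ) ≤ (m:ℝ) := by exact_mod_cast hm
    have hmr0 : (0:ℝ) < (m:ℝ) := lt_of_lt_of_le one_pos hmr
    have hP : ∀ t : Fin m → Y, (0:ℝ) ≤ ∏ i, q (t i) :=
      fun t => Finset.prod_nonneg fun i _ => (hq_pos (t i)).le
    have hPsum : ∑ t : Fin m → Y, ∏ i, q (t i) = 1 := mosaic_norm hq_sum
    have hS : ∀ t : Fin m → Y, (m:ℝ) * c ≤ ∑ k, w (t k) := by
      intro t
      calc (m:ℝ) * c = ∑ _k : Fin m, c := by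
            rw [Finset.sum_const, Finset.card_univ, Fintype.card_fin, nsmul_eq_mul]
        _ ≤ ∑ k, w (t k) := Finset.sum_le_sum fun k _ => Finset.inf'_le _ (mem_univ _)
    have hd2 : (0:ℝ) < a + (m:ℝ)*c := by positivity
    have hd : (0:ℝ) < a + (m:ℝ)*Z := by positivity
    have hx : ∀ t : Fin m → Y, (0:ℝ) < a + ∑ k, w (t k) :=
      fun t => lt_of_lt_of_le hd2 (by linarith [hS t])
    -- pointwise bound
    have key : ∀ t : Fin m → Y,
        |(a + ∑ k, w (t k))⁻¹ - (a + (m:ℝ)*Z)⁻¹|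
          ≤ |(∑ k, w (t k)) - (m:ℝ)*Z| / ((a + (m:ℝ)*c) * (a + (m:ℝ)*Z)) := by
      intro t
      have h1 : (a + ∑ k, w (t k))⁻¹ - (a + (m:ℝ)*Z)⁻¹
          = ((m:ℝ)*Z - ∑ k, w (t k)) / ((a + ∑ k, w (t k)) * (a + (m:ℝ)*Z)) := by
        rw [inv_sub_inv (hx t).ne' hd.ne']
        congr 1
        ring
      rw [h1, abs_div, abs_of_pos (mul_pos (hx t) hd), abs_sub_comm]
      exact div_le_div_of_nonneg_left (abs_nonneg _)
        (mul_pos hd2 hd)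
        (mul_le_mul_of_nonneg_right (by linarith [hS t]) hd.le)
    -- expectation of |S - mZ| via Cauchy-Schwarz
    have hCS : ∑ t : Fin m → Y, (∏ i, q (t i)) * |(∑ k, w (t k)) - (m:ℝ)*Z|
        ≤ Real.sqrt ((m:ℝ) * V) := by
      set X : (Fin m → Y) → ℝ := fun t => (∑ k, w (t k)) - (m:ℝ)*Z with hX_def
      have cs := Finset.sum_mul_sq_le_sq_mul_sq univ
        (fun t : Fin m → Y => Real.sqrt (∏ i, q (t i)))
        (fun t : Fin m → Y => Real.sqrt (∏ i, q (t i)) * |X t|)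
      have e1 : ∀ t : Fin m → Y,
          Real.sqrt (∏ i, q (t i)) * (Real.sqrt (∏ i, q (t i)) * |X t|)
            = (∏ i, q (t i)) * |X t| := by
        intro t; rw [← mul_assoc, Real.mul_self_sqrt (hP t)]
      have e2 : ∀ t : Fin m → Y, (Real.sqrt (∏ i, q (t i)))^2 = ∏ i, q (t i) :=
        fun t => Real.sq_sqrt (hP t)
      have e3 : ∀ t : Fin m → Y, (Real.sqrt (∏ i, q (t i)) * |X t|)^2
          = (∏ i, q (t i)) * (X t)^2 := by
        intro t; rw [mul_pow, Real.sq_sqrt (hP t), sq_abs]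
      simp only [e1, e2, e3] at cs
      rw [hPsum, one_mul] at cs
      have hvar := mosaic_var (w := w) (m := m) hq_sum
      rw [← hZ_def, ← hV_def] at hvar
      have hle : (∑ t : Fin m → Y, (∏ i, q (t i)) * |X t|)^2 ≤ (m:ℝ) * V :=
        le_trans cs hvar
      have hnn : (0:ℝ) ≤ ∑ t : Fin m → Y, (∏ i, q (t i)) * |X t| :=
        Finset.sum_nonneg fun t _ => mul_nonneg (hP t) (abs_nonneg _)
      calc ∑ t : Fin m → Y, (∏ i, q (t i)) * |X t|
          = Real.sqrt ((∑ t : Fin m → Y, (∏ i, q (t i)) * |X t|)^2) :=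
            (Real.sqrt_sq hnn).symm
        _ ≤ Real.sqrt ((m:ℝ) * V) := Real.sqrt_le_sqrt hle
    -- combine
    have hdiff : F m - (a + (m:ℝ)*Z)⁻¹
        = ∑ t : Fin m → Y, (∏ i, q (t i)) * ((a + ∑ k, w (t k))⁻¹ - (a + (m:ℝ)*Z)⁻¹) := by
      simp only [mul_sub, Finset.sum_sub_distrib, ← Finset.sum_mul, hPsum, one_mul, hF_def]
    have habs : |F m - (a + (m:ℝ)*Z)⁻¹|
        ≤ Real.sqrt ((m:ℝ) * V) / ((a + (m:ℝ)*c) * (a + (m:ℝ)*Z)) := by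
      rw [hdiff]
      calc |∑ t : Fin m → Y, (∏ i, q (t i)) * ((a + ∑ k, w (t k))⁻¹ - (a + (m:ℝ)*Z)⁻¹)|
          ≤ ∑ t : Fin m → Y, |(∏ i, q (t i)) * ((a + ∑ k, w (t k))⁻¹ - (a + (m:ℝ)*Z)⁻¹)| :=
            Finset.abs_sum_le_sum_abs _ _
        _ ≤ ∑ t : Fin m → Y, (∏ i, q (t i)) *
              (|(∑ k, w (t k)) - (m:ℝ)*Z| / ((a + (m:ℝ)*c) * (a + (m:ℝ)*Z))) := by
            refine Finset.sum_le_sum fun t _ => ?_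
            rw [abs_mul, abs_of_nonneg (hP t)]
            exact mul_le_mul_of_nonneg_left (key t) (hP t)
        _ = (∑ t : Fin m → Y, (∏ i, q (t i)) * |(∑ k, w (t k)) - (m:ℝ)*Z|)
              / ((a + (m:ℝ)*c) * (a + (m:ℝ)*Z)) := by
            rw [Finset.sum_div]
            exact Finset.sum_congr rfl fun t _ => by rw [mul_div_assoc]
        _ ≤ Real.sqrt ((m:ℝ) * V) / ((a + (m:ℝ)*c) * (a + (m:ℝ)*Z)) :=
            (div_le_div_iff_of_pos_right (mul_pos hd2 hd)).mpr hCS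
    have hfact : ((m:ℝ)+1) * F m - ((m:ℝ)+1)/(a + (m:ℝ)*Z)
        = ((m:ℝ)+1) * (F m - (a + (m:ℝ)*Z)⁻¹) := by
      rw [div_eq_mul_inv]; ring
    rw [hfact, abs_mul, abs_of_pos (by linarith : (0:ℝ) < (m:ℝ)+1)]
    have step1 : ((m:ℝ)+1) * |F m - (a + (m:ℝ)*Z)⁻¹|
        ≤ ((m:ℝ)+1) * (Real.sqrt ((m:ℝ) * V) / ((a + (m:ℝ)*c) * (a + (m:ℝ)*Z))) :=
      mul_le_mul_of_nonneg_left habs (by linarith)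
    refine step1.trans ?_
    -- final arithmetic
    have hsm : Real.sqrt (m:ℝ) * Real.sqrt (m:ℝ) = (m:ℝ) := Real.mul_self_sqrt hmr0.le
    have hsm1 : (1:ℝ) ≤ Real.sqrt (m:ℝ) := by
      rw [show (1:ℝ) = Real.sqrt 1 by simp]
      exact Real.sqrt_le_sqrt hmr
    have hsmpos : (0:ℝ) < Real.sqrt (m:ℝ) := by linarith
    have hsV : (0:ℝ) ≤ Real.sqrt V := Real.sqrt_nonneg _
    have hcZ : (0:ℝ) < c * Z := mul_pos hc hZ
    rw [Real.sqrt_mul hmr0.le, hK_def, mul_div_assoc', div_div,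
      div_le_div_iff₀ (mul_pos hd2 hd) (mul_pos hcZ hsmpos)]
    -- goal: ((m+1) * (sqrt m * sqrt V)) * (c*Z*sqrt m) ≤ 2 * sqrt V * ((a+mc)*(a+mZ))
    have lhs_eq : ((m:ℝ)+1) * (Real.sqrt (m:ℝ) * Real.sqrt V) * (c * Z * Real.sqrt (m:ℝ))
        = ((m:ℝ)+1) * (m:ℝ) * Real.sqrt V * (c * Z) := by
      rw [show ((m:ℝ)+1) * (Real.sqrt (m:ℝ) * Real.sqrt V) * (c * Z * Real.sqrt (m:ℝ))
          = ((m:ℝ)+1) * Real.sqrt V * (c * Z) * (Real.sqrt (m:ℝ) * Real.sqrt (m:ℝ)) from by ring,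
        hsm]
      ring
    rw [lhs_eq]
    nlinarith [mul_nonneg (mul_nonneg hsV hcZ.le)
        (mul_nonneg hmr0.le (by linarith : (0:ℝ) ≤ (m:ℝ) - 1)),
      mul_nonneg hsV (mul_pos ha ha).le,
      mul_nonneg hsV (mul_pos (mul_pos ha hmr0) hZ).le,
      mul_nonneg hsV (mul_pos (mul_pos hmr0 hc) ha).le]
  -- limits
  have h1 : Tendsto (fun m : ℕ => ((m:ℝ)+1)/(a + (m:ℝ)*Z)) atTop (nhds Z⁻¹) := by
    have hinv : Tendsto (fun m : ℕ => ((m:ℝ))⁻¹) atTop (nhds 0) :=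
      tendsto_inv_atTop_nhds_zero_nat
    have hnum : Tendsto (fun m : ℕ => 1 + ((m:ℝ))⁻¹) atTop (nhds 1) := by
      simpa using tendsto_const_nhds.add hinv
    have hden : Tendsto (fun m : ℕ => a * ((m:ℝ))⁻¹ + Z) atTop (nhds Z) := by
      simpa using (tendsto_const_nhds.mul hinv).add (tendsto_const_nhds (x := Z))
    have hq := hnum.div hden hZ.ne'
    rw [one_div] at hq
    refine Tendsto.congr' ?_ hq
    filter_upwards [eventually_ge_atTop 1] with m hm
    have hmr0 : (0:ℝ) < (m:ℝ) := by exact_mod_cast hm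
    have hd : (0:ℝ) < a + (m:ℝ)*Z := by positivity
    have hd' : (0:ℝ) < a * ((m:ℝ))⁻¹ + Z := by positivity
    have hm1 : (m:ℝ) * ((m:ℝ))⁻¹ = 1 := mul_inv_cancel₀ hmr0.ne'
    simp only [Pi.div_apply]
    rw [div_eq_div_iff hd'.ne' hd.ne']
    linear_combination (Z - a) * hm1
  have h2 : Tendsto (fun m : ℕ => K / Real.sqrt (m:ℝ)) atTop (nhds 0) := by
    have hs : Tendsto (fun m : ℕ => (Real.sqrt (m:ℝ))⁻¹) atTop (nhds 0) := by
      simpa [Function.comp_def, Real.sqrt_inv] using (Real.continuous_sqrt.tendsto 0).comp tendsto_inv_atTop_nhds_zero_nat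
    simpa [div_eq_mul_inv] using tendsto_const_nhds.mul hs
  have h3 : Tendsto (fun m : ℕ => ((m:ℝ)+1) * F m - ((m:ℝ)+1)/(a + (m:ℝ)*Z)) atTop (nhds 0) := by
    refine squeeze_zero_norm' ?_ h2
    filter_upwards [eventually_ge_atTop 1] with m hm
    simpa [Real.norm_eq_abs] using hbound m hm
  have H : Tendsto (fun m : ℕ => ((m:ℝ)+1) * F m) atTop (nhds Z⁻¹) := by
    have := h3.add h1
    simpa using this
  -- assemble
  have final : Tendsto (fun m : ℕ => q y * a * (((m:ℝ)+1) * F m)) atTop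
      (nhds (q y * a * Z⁻¹)) := (tendsto_const_nhds (x := q y * a)).mul H
  have hsum_eq : ∀ m : ℕ, (∑ t : Fin m → Y, (∏ i, q (t i)) * (a / (a + ∑ k, w (t k))))
      = a * F m := by
    intro m
    rw [hF_def, Finset.mul_sum]
    exact Finset.sum_congr rfl fun t _ => by rw [div_eq_mul_inv]; ring
  have hlim : q y * a / Z = q y * a * Z⁻¹ := div_eq_mul_inv _ _
  rw [hlim]
  exact Filter.Tendsto.congr (fun m => by rw [hsum_eq m]; ring) final

end MosaicAux

/-- The pointwise limit of MOSAIC's induced policy exists, is a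
probability mass function, and maximizes the platform's KL-regularized
objective over probability mass functions on `Y`. -/
theorem mosaic_limit_exists_is_pmf_and_maximizes
    {Y : Type*} [Fintype Y] [Nonempty Y] [DecidableEq Y]
    (πref q : Y → ℝ)
    (hπref_pos : ∀ y, 0 < πref y) (hπref_sum : ∑ y, πref y = 1)
    (hq_pos : ∀ y, 0 < q y) (hq_sum : ∑ y, q y = 1)
    (r : Y → ℝ) (τ : ℝ) (hτ : 0 < τ)
    (w : Y → ℝ) (hw : ∀ y, w y = πref y * Real.exp (r y / τ) / q y)
    (πM : ℕ → Y → ℝ)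
    (hπM : ∀ (M : ℕ) (y : Y), πM M y =
      ∑ s : Fin M → Y, (∏ j, q (s j)) *
        (∑ j, if s j = y then w (s j) / (∑ k, w (s k)) else 0)) :
    ∃ πstar : Y → ℝ,
      (∀ y, Filter.Tendsto (fun M => πM M y) Filter.atTop (nhds (πstar y))) ∧
      (∀ y, 0 ≤ πstar y) ∧ (∑ y, πstar y = 1) ∧
      (∀ π : Y → ℝ, (∀ y, 0 ≤ π y) → (∑ y, π y = 1) →
        (∑ y, π y * r y) - τ * ∑ y, π y * Real.log (π y / πref y) ≤
        (∑ y, πstar y * r y) - τ * ∑ y, πstar y * Real.log (πstar y / πref y)) := by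
  have hw_pos : ∀ y, 0 < w y := fun y => by
    rw [hw y]
    exact div_pos (mul_pos (hπref_pos y) (Real.exp_pos _)) (hq_pos y)
  have hqw : ∀ y, q y * w y = πref y * Real.exp (r y / τ) := by
    intro y
    rw [hw y, mul_div_cancel₀ _ (hq_pos y).ne']
  set Z : ℝ := ∑ a, q a * w a with hZ_def
  have hZ_alt : Z = ∑ a, πref a * Real.exp (r a / τ) := by
    rw [hZ_def]; exact Finset.sum_congr rfl fun a _ => hqw a
  have hZ_pos : 0 < Z :=
    Finset.sum_pos (fun i _ => mul_pos (hq_pos i) (hw_pos i)) univ_nonempty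
  set πstar : Y → ℝ := fun y => q y * w y / Z with hπstar_def
  have hπstar_pos : ∀ y, 0 < πstar y := fun y =>
    div_pos (mul_pos (hq_pos y) (hw_pos y)) hZ_pos
  have hπstar_sum : ∑ y, πstar y = 1 := by
    rw [hπstar_def]
    simp only
    rw [← Finset.sum_div, ← hZ_def, div_self hZ_pos.ne']
  refine ⟨πstar, ?_, fun y => (hπstar_pos y).le, hπstar_sum, ?_⟩
  · -- convergence
    intro y
    rw [← Filter.tendsto_add_atTop_iff_nat 1]
    have hcong : ∀ m : ℕ, πM (m+1) y = ((m:ℝ)+1) * (q y * ∑ t : Fin m → Y, (∏ i, q (t i)) *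
        (w y / (w y + ∑ k, w (t k)))) := by
      intro m
      rw [hπM (m+1) y, mosaic_step y m]
    exact Filter.Tendsto.congr (fun m => (hcong m).symm)
      (mosaic_limit hq_pos hq_sum hw_pos y)
  · -- maximization
    intro π hπ_nonneg hπ_sum
    have hlogstar : ∀ y, Real.log (πstar y / πref y) = r y / τ - Real.log Z := by
      intro y
      have hps : πstar y = πref y * (Real.exp (r y / τ) / Z) := by
        rw [hπstar_def]
        simp only
        rw [hqw y]
        ring
      rw [hps, mul_div_cancel_left₀ _ (hπref_pos y).ne',
        Real.log_div (Real.exp_ne_zero _) hZ_pos.ne', Real.log_exp]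
    -- identity for any pmf p
    have identity : ∀ p : Y → ℝ, (∀ y, 0 ≤ p y) → (∑ y, p y = 1) →
        (∑ y, p y * r y) - τ * ∑ y, p y * Real.log (p y / πref y)
          = τ * Real.log Z - τ * ∑ y, p y * Real.log (p y / πstar y) := by
      intro p hp hps
      have hterm : ∀ y, p y * Real.log (p y / πref y)
          = p y * Real.log (p y / πstar y) + p y * (r y / τ - Real.log Z) := by
        intro y
        rcases eq_or_lt_of_le (hp y) with h0 | hpos
        · rw [← h0]; ring
        · have e1 : Real.log (p y / πref y)
              = Real.log (p y / πstar y) + Real.log (πstar y / πref y) := by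
            rw [Real.log_div hpos.ne' (hπref_pos y).ne',
              Real.log_div hpos.ne' (hπstar_pos y).ne',
              Real.log_div (hπstar_pos y).ne' (hπref_pos y).ne']
            ring
          rw [e1, hlogstar y]; ring
      rw [Finset.sum_congr rfl fun y _ => hterm y]
      rw [Finset.sum_add_distrib]
      have e2 : ∑ y, p y * (r y / τ - Real.log Z)
          = (∑ y, p y * r y) / τ - Real.log Z := by
        have : ∀ y, p y * (r y / τ - Real.log Z)
            = (p y * r y) / τ - Real.log Z * p y := by intro y; ring
        rw [Finset.sum_congr rfl fun y _ => this y, Finset.sum_sub_distrib,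
          ← Finset.sum_div, ← Finset.mul_sum, hps, mul_one]
      rw [e2]
      field_simp
      ring
    have hKL : ∀ p : Y → ℝ, (∀ y, 0 ≤ p y) → (∑ y, p y = 1) →
        0 ≤ ∑ y, p y * Real.log (p y / πstar y) := by
      intro p hp hps
      have key : ∀ y, p y - πstar y ≤ p y * Real.log (p y / πstar y) := by
        intro y
        rcases eq_or_lt_of_le (hp y) with h0 | hpos
        · rw [← h0]; simp [(hπstar_pos y).le]
        · have hlog : Real.log (πstar y / p y) ≤ πstar y / p y - 1 :=
            Real.log_le_sub_one_of_pos (div_pos (hπstar_pos y) hpos)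
          have hflip : Real.log (p y / πstar y) = - Real.log (πstar y / p y) := by
            rw [Real.log_div hpos.ne' (hπstar_pos y).ne',
              Real.log_div (hπstar_pos y).ne' hpos.ne']
            ring
          have := mul_le_mul_of_nonneg_left hlog (hp y)
          rw [hflip]
          have he : p y * (πstar y / p y - 1) = πstar y - p y := by
            field_simp
          nlinarith [this, he]
      have : ∑ y, (p y - πstar y) ≤ ∑ y, p y * Real.log (p y / πstar y) :=
        Finset.sum_le_sum fun y _ => key y
      rw [Finset.sum_sub_distrib, hps, hπstar_sum, sub_self] at this
      exact this
    rw [identity π hπ_nonneg hπ_sum, identity πstar (fun y => (hπstar_pos y).le) hπstar_sum]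
    have hzero : ∑ y, πstar y * Real.log (πstar y / πstar y) = 0 := by
      refine Finset.sum_eq_zero fun y _ => ?_
      rw [div_self (hπstar_pos y).ne', Real.log_one, mul_zero]
    rw [hzero, mul_zero, sub_zero]
    have := hKL π hπ_nonneg hπ_sum
    nlinarith [this, hτ]
end

section
/- Suppose w(y) ≤ C for all y ∈ Y, where C > 0, and let N = |Y|. Let ε ∈ (0, N] and δ ∈ (0,1). If the positive integer M satisfies M ≥ (2·C²·N²/ε²)·ln(2·(N+1)/δ), then with probability at least 1 − δ over the i.i.d. draw of y_1,…,y_M from q, one has Q̂_M(Y) > 0 and the self-normalized importance-sampled distribution π̂_M(y) = Q̂_M(y)/Q̂_M(Y) satisfies d_TV(π̂_M, π*) = (1/2)·∑_{y∈Y} |π̂_M(y) − π*(y)| ≤ ε. -/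
/-!
`Q̂_M(Y)` and `Q̂_M(y)` are the empirical means of the `|Y| + 1` statistics `w` and
`w · 1{· = y}`, which take values in `[0, C]` and have `q`-means `1` and `π*(y)`. By Hoeffding's
inequality and a union bound over these statistics, with probability at least `1 - δ` each
empirical mean is within `τ = ε / (2|Y|)` of its mean: the bound on `M` makes each of the
`|Y| + 1` failure probabilities at most `δ / (|Y| + 1)`. On that event `Q̂_M(Y) > 1 - τ ≥ 1/2` and
`∑_y |Q̂_M(y) - π*(y)| ≤ |Y| τ = ε / 2`, and since `d_TV(a / Z, p) ≤ ‖a - p‖₁ / Z` for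
`Z = ∑ a`, normalizing costs at most a factor `2`.
-/

open MeasureTheory ProbabilityTheory Real
open scoped NNReal

section Hoeffding

lemma measureReal_abs_sum_ge_le_of_iIndepFun {Ω ι : Type*} {mΩ : MeasurableSpace Ω}
    {μ : Measure Ω} [IsFiniteMeasure μ] {X : ι → Ω → ℝ} (h_indep : iIndepFun X μ)
    {c : ι → ℝ≥0} {s : Finset ι} (h_subG : ∀ i ∈ s, HasSubgaussianMGF (X i) (c i) μ) {ε : ℝ}
    (hε : 0 ≤ ε) :
    μ.real {ω | ε ≤ |∑ i ∈ s, X i ω|} ≤ 2 * exp (-ε ^ 2 / (2 * ∑ i ∈ s, c i)) := by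
  have h_pos := HasSubgaussianMGF.measure_sum_ge_le_of_iIndepFun h_indep h_subG hε
  have h_neg : μ.real {ω | ε ≤ ∑ i ∈ s, (-X i) ω} ≤ exp (-ε ^ 2 / (2 * ∑ i ∈ s, c i)) :=
    HasSubgaussianMGF.measure_sum_ge_le_of_iIndepFun
      (h_indep.comp (fun _ x ↦ -x) fun _ ↦ measurable_neg) (fun i hi ↦ (h_subG i hi).neg) hε
  calc μ.real {ω | ε ≤ |∑ i ∈ s, X i ω|}
      ≤ μ.real ({ω | ε ≤ ∑ i ∈ s, X i ω} ∪ {ω | ε ≤ ∑ i ∈ s, (-X i) ω}) := by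
        refine measureReal_mono fun ω hω ↦ ?_
        simp only [Set.mem_ofPred_eq, Set.mem_union, Pi.neg_apply,
          Finset.sum_neg_distrib] at hω ⊢
        rcases le_abs'.mp hω with h | h
        · exact .inr (by linarith)
        · exact .inl h
    _ ≤ 2 * exp (-ε ^ 2 / (2 * ∑ i ∈ s, c i)) := by
        linarith [measureReal_union_le (μ := μ) {ω | ε ≤ ∑ i ∈ s, X i ω}
          {ω | ε ≤ ∑ i ∈ s, (-X i) ω}]

variable {ι Y : Type*} [Fintype ι] [Nonempty ι] {mY : MeasurableSpace Y}
  (ν : Measure Y) [IsProbabilityMeasure ν]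

lemma measureReal_pi_abs_mean_sub_integral_ge_le {g : Y → ℝ} (hg : Measurable g) {a b : ℝ}
    (hgab : ∀ y, g y ∈ Set.Icc a b) {t : ℝ} (ht : 0 ≤ t) :
    (Measure.pi fun _ : ι ↦ ν).real
        {s | t ≤ |1 / Fintype.card ι * ∑ i, g (s i) - ∫ y, g y ∂ν|}
      ≤ 2 * exp (-(2 * Fintype.card ι * t ^ 2 / (b - a) ^ 2)) := by
  set μ := Measure.pi fun _ : ι ↦ ν
  have hn : (0 : ℝ) < Fintype.card ι := Nat.cast_pos.mpr Fintype.card_pos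
  have h_subG : ∀ i ∈ Finset.univ, HasSubgaussianMGF (fun s ↦ g (s i) - ∫ y, g y ∂ν)
      ((‖b - a‖₊ / 2) ^ 2) μ := fun i _ ↦ by
    simpa [μ, integral_comp_eval (μ := fun _ : ι ↦ ν) hg.aestronglyMeasurable] using
      hasSubgaussianMGF_of_mem_Icc (μ := μ) (X := fun s ↦ g (s i))
        (hg.comp (measurable_pi_apply i)).aemeasurable (ae_of_all _ fun s ↦ hgab (s i))
  have h_indep : iIndepFun (fun i s ↦ g (s i) - ∫ y, g y ∂ν) μ :=
    iIndepFun_pi (X := fun _ y ↦ g y - ∫ y, g y ∂ν) fun _ ↦ (hg.sub_const _).aemeasurable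
  have h_set : {s : ι → Y | t ≤ |1 / Fintype.card ι * ∑ i, g (s i) - ∫ y, g y ∂ν|} =
      {s | Fintype.card ι * t ≤ |∑ i, (g (s i) - ∫ y, g y ∂ν)|} := by
    ext s
    rw [Set.mem_ofPred_eq, Set.mem_ofPred_eq, ← le_div_iff₀' hn, ← abs_of_pos hn, ← abs_div,
      abs_of_pos hn, Finset.sum_sub_distrib, Finset.sum_const, Finset.card_univ, nsmul_eq_mul]
    congr! 2
    field_simp
  rw [h_set]
  refine (measureReal_abs_sum_ge_le_of_iIndepFun h_indep h_subG (by positivity)).trans_eq ?_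
  simp only [Finset.sum_const, Finset.card_univ, nsmul_eq_mul, NNReal.coe_mul,
    NNReal.coe_natCast, NNReal.coe_pow, NNReal.coe_div, coe_nnnorm, Real.norm_eq_abs,
    NNReal.coe_ofNat, div_pow, sq_abs]
  rcases eq_or_ne (b - a) 0 with hab | hab
  · simp [hab]
  field_simp

lemma measureReal_pi_exists_abs_mean_sub_integral_ge_le {κ : Type*} [Fintype κ]
    {g : κ → Y → ℝ} (hg : ∀ k, Measurable (g k)) {a b : ℝ} (hgab : ∀ k y, g k y ∈ Set.Icc a b)
    {t : ℝ} (ht : 0 ≤ t) :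
    (Measure.pi fun _ : ι ↦ ν).real
        {s | ∃ k, t ≤ |1 / Fintype.card ι * ∑ i, g k (s i) - ∫ y, g k y ∂ν|}
      ≤ Fintype.card κ * (2 * exp (-(2 * Fintype.card ι * t ^ 2 / (b - a) ^ 2))) := by
  rw [Set.ofPred_exists]
  refine (measureReal_iUnion_fintype_le _).trans <| (Finset.sum_le_sum fun k _ ↦
    measureReal_pi_abs_mean_sub_integral_ge_le ν (hg k) (hgab k) ht).trans_eq ?_
  simp

end Hoeffding

section FiniteType

variable {Y : Type*} [Fintype Y]

lemma measureReal_pi_eq_sum_prod {ι : Type*} [Fintype ι] [DecidableEq ι] [MeasurableSpace Y]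
    [MeasurableSingletonClass Y] (ν : Measure Y) [IsFiniteMeasure ν] (A : Set (ι → Y))
    [DecidablePred (· ∈ A)] :
    (Measure.pi fun _ : ι ↦ ν).real A = ∑ s, if s ∈ A then ∏ i, ν.real {s i} else 0 := by
  have hA : A = ↑(Finset.univ.filter (· ∈ A)) := by ext; simp
  rw [← Finset.sum_filter]
  conv_lhs => rw [hA, ← sum_measureReal_singleton]
  refine Finset.sum_congr rfl fun s _ ↦ ?_
  rw [measureReal_def, Measure.pi_singleton, ENNReal.toReal_prod]
  rfl

lemma exists_isProbabilityMeasure_measureReal_singleton_eq [MeasurableSpace Y]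
    [MeasurableSingletonClass Y] (q : Y → ℝ) (hq0 : ∀ y, 0 ≤ q y) (hq1 : ∑ y, q y = 1) :
    ∃ ν : Measure Y, IsProbabilityMeasure ν ∧ ∀ y, ν.real {y} = q y := by
  have h1 : ∑ y, ENNReal.ofReal (q y) = 1 := by
    rw [← ENNReal.ofReal_sum_of_nonneg fun y _ ↦ hq0 y, hq1, ENNReal.ofReal_one]
  refine ⟨(PMF.ofFintype _ h1).toMeasure, inferInstance, fun y ↦ ?_⟩
  rw [measureReal_def, PMF.toMeasure_apply_singleton _ _ (measurableSet_singleton y),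
    PMF.ofFintype_apply, ENNReal.toReal_ofReal (hq0 y)]

lemma half_sum_abs_div_sum_sub_le {a p : Y → ℝ} (hp0 : ∀ y, 0 ≤ p y) (hp1 : ∑ y, p y = 1)
    (ha : 0 < ∑ y, a y) :
    (1 / 2) * ∑ y, |a y / ∑ z, a z - p y| ≤ (∑ y, |a y - p y|) / ∑ y, a y := by
  set Z := ∑ y, a y
  have h_mass : |Z - 1| ≤ ∑ y, |a y - p y| := by
    rw [← hp1, ← Finset.sum_sub_distrib]
    exact Finset.abs_sum_le_sum_abs _ _
  have h_term : ∀ y, |a y / Z - p y| ≤ (|a y - p y| + p y * |Z - 1|) / Z := fun y ↦ by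
    rw [le_div_iff₀ ha]
    calc |a y / Z - p y| * Z = |(a y - p y) - p y * (Z - 1)| := by
          rw [← abs_of_pos ha, ← abs_mul, abs_of_pos ha]; congr 1; field_simp; ring
      _ ≤ |a y - p y| + p y * |Z - 1| := by
          rw [← abs_of_nonneg (hp0 y), ← abs_mul, abs_of_nonneg (hp0 y)]; exact abs_sub _ _
  calc (1 / 2) * ∑ y, |a y / Z - p y|
      ≤ (1 / 2) * ∑ y, (|a y - p y| + p y * |Z - 1|) / Z := by
        gcongr with y; exact h_term y
    _ = (1 / 2) * ((∑ y, |a y - p y|) + |Z - 1|) / Z := by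
        rw [← Finset.sum_div, Finset.sum_add_distrib, ← Finset.sum_mul, hp1, one_mul]; ring
    _ ≤ (∑ y, |a y - p y|) / Z := by gcongr; linarith

lemma pos_and_half_sum_abs_div_sub_le {a p : Y → ℝ} {Z τ : ℝ} (hp0 : ∀ y, 0 ≤ p y)
    (hp1 : ∑ y, p y = 1) (hZ : ∑ y, a y = Z) (hτ : τ ≤ 1 / 2) (hZ1 : |Z - 1| < τ)
    (hap : ∀ y, |a y - p y| < τ) :
    0 < Z ∧ (1 / 2) * ∑ y, |a y / Z - p y| ≤ 2 * Fintype.card Y * τ := by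
  subst hZ
  have h_half : 1 / 2 < ∑ y, a y := by linarith [abs_lt.mp hZ1]
  have h_L1 : ∑ y, |a y - p y| ≤ Fintype.card Y * τ := by
    simpa using Finset.sum_le_sum fun y (_ : y ∈ Finset.univ) ↦ (hap y).le
  refine ⟨by linarith, ?_⟩
  calc (1 / 2) * ∑ y, |a y / ∑ z, a z - p y| ≤ (∑ y, |a y - p y|) / ∑ y, a y :=
        half_sum_abs_div_sum_sub_le hp0 hp1 (by linarith)
    _ ≤ (Fintype.card Y * τ) / (1 / 2) := by
        gcongr
        exact (Finset.sum_nonneg fun y _ ↦ abs_nonneg _).trans h_L1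
    _ = 2 * Fintype.card Y * τ := by ring

end FiniteType

section WeightStat

variable {Y : Type*} [DecidableEq Y] (w : Y → ℝ)

/-- The empirical means of `weightStat w none` and `weightStat w (some y)` over a sample are
`Q̂_M(Y)` and `Q̂_M(y)`. -/
def weightStat (k : Option Y) (z : Y) : ℝ :=
  k.elim (w z) fun y ↦ w z * if z = y then 1 else 0

lemma weightStat_mem_Icc {C : ℝ} (hw0 : ∀ z, 0 ≤ w z) (hwC : ∀ z, w z ≤ C) (k : Option Y)
    (z : Y) : weightStat w k z ∈ Set.Icc 0 C := by
  rcases k with _ | y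
  · exact ⟨hw0 z, hwC z⟩
  · by_cases hz : z = y
    · simpa [weightStat, hz] using ⟨hw0 y, hwC y⟩
    · simpa [weightStat, hz] using (hw0 z).trans (hwC z)

lemma integral_weightStat [Fintype Y] [MeasurableSpace Y] [MeasurableSingletonClass Y]
    {ν : Measure Y} [IsFiniteMeasure ν] {p : Y → ℝ} (hp : ∀ y, ν.real {y} * w y = p y)
    (hp1 : ∑ y, p y = 1) (k : Option Y) :
    ∫ z, weightStat w k z ∂ν = k.elim 1 p := by
  rw [integral_fintype .of_finite]
  cases k <;> simp [weightStat, hp, hp1]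

end WeightStat

lemma mul_two_mul_exp_neg_le_of_log_le {K δ x : ℝ} (hK : 0 < K) (hδ : 0 < δ)
    (h : log (2 * K / δ) ≤ x) : K * (2 * exp (-x)) ≤ δ := by
  calc K * (2 * exp (-x)) ≤ K * (2 * exp (-log (2 * K / δ))) := by gcongr
    _ = δ := by rw [exp_neg, exp_log (by positivity), inv_div]; field_simp

lemma add_one_mul_two_mul_exp_neg_le {C N ε δ M : ℝ} (hC : 0 < C) (hN : 0 < N) (hε : 0 < ε)
    (hδ : 0 < δ) (hM : 2 * C ^ 2 * N ^ 2 / ε ^ 2 * log (2 * (N + 1) / δ) ≤ M) :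
    (N + 1) * (2 * exp (-(2 * M * (ε / (2 * N)) ^ 2 / C ^ 2))) ≤ δ := by
  refine mul_two_mul_exp_neg_le_of_log_le (by positivity) hδ ?_
  rw [div_mul_eq_mul_div, div_le_iff₀ (by positivity)] at hM
  rw [le_div_iff₀ (by positivity)]
  field_simp
  linarith

open Classical in
theorem mosaic_snis_tv_concentration_general
    {Y : Type*} [Fintype Y] [DecidableEq Y]
    (q πstar : Y → ℝ)
    (hq_pos : ∀ y, 0 < q y) (hq_sum : ∑ y, q y = 1)
    (hπ_nonneg : ∀ y, 0 ≤ πstar y) (hπ_sum : ∑ y, πstar y = 1)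
    (w : Y → ℝ) (hw : ∀ y, w y = πstar y / q y)
    (C : ℝ) (hC : 0 < C) (hwC : ∀ y, w y ≤ C)
    (N : ℕ) (hN : N = Fintype.card Y)
    (ε δ : ℝ) (hε0 : 0 < ε) (hεN : ε ≤ (N : ℝ)) (hδ0 : 0 < δ)
    (M : ℕ) (hM : 1 ≤ M)
    (hMbound : (2 * C ^ 2 * (N : ℝ) ^ 2 / ε ^ 2) *
      Real.log (2 * ((N : ℝ) + 1) / δ) ≤ (M : ℝ))
    (Qhat : (Fin M → Y) → Y → ℝ)
    (hQhat : ∀ s y, Qhat s y =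
      (1 / (M : ℝ)) * ∑ j, w (s j) * (if s j = y then 1 else 0))
    (Qtot : (Fin M → Y) → ℝ)
    (hQtot : ∀ s, Qtot s = (1 / (M : ℝ)) * ∑ j, w (s j)) :
    1 - δ ≤
      ∑ s : Fin M → Y,
        if (0 < Qtot s ∧
            (1 / 2) * ∑ y, |Qhat s y / Qtot s - πstar y| ≤ ε)
        then (∏ j, q (s j)) else 0 := by
  let _ : MeasurableSpace Y := ⊤
  obtain ⟨ν, _, hνq⟩ := exists_isProbabilityMeasure_measureReal_singleton_eq q
    (fun y ↦ (hq_pos y).le) hq_sum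
  have _ : Nonempty (Fin M) := ⟨⟨0, hM⟩⟩
  have hN0 : (0 : ℝ) < N := hε0.trans_le hεN
  have h_mean := integral_weightStat w (p := πstar)
    (fun y ↦ by rw [hνq, hw]; field_simp [(hq_pos y).ne']) hπ_sum
  set μ := Measure.pi fun _ : Fin M ↦ ν
  set τ := ε / (2 * N)
  set bad := {s : Fin M → Y | ∃ k, τ ≤ |1 / Fintype.card (Fin M) * ∑ j, weightStat w k (s j) -
    ∫ z, weightStat w k z ∂ν|}
  have h_good : ∀ s ∉ bad, 0 < Qtot s ∧ (1 / 2) * ∑ y, |Qhat s y / Qtot s - πstar y| ≤ ε := by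
    intro s hs
    simp only [bad, Set.mem_ofPred_eq, not_exists, not_le, Fintype.card_fin, h_mean] at hs
    refine (pos_and_half_sum_abs_div_sub_le hπ_nonneg hπ_sum ?_ ?_
      (by simpa [weightStat, hQtot] using hs none)
      fun y ↦ by simpa [weightStat, hQhat] using hs (some y)).imp_right (·.trans_eq ?_)
    · simp [hQhat, hQtot, ← Finset.mul_sum, Finset.sum_comm (γ := Y)]
    · rw [div_le_iff₀ (by positivity)]; linarith
    · simp [τ, ← hN]; field_simp
  have h_bad : μ.real bad ≤ δ := by
    refine (measureReal_pi_exists_abs_mean_sub_integral_ge_le ν (fun _ ↦ .of_discrete)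
      (weightStat_mem_Icc w (fun y ↦ hw y ▸ div_nonneg (hπ_nonneg y) (hq_pos y).le) hwC)
      (by positivity)).trans ?_
    simpa [← hN] using add_one_mul_two_mul_exp_neg_le hC hN0 hε0 hδ0 hMbound
  simp only [← hνq]
  refine le_trans ?_ (measureReal_pi_eq_sum_prod ν
    {s | 0 < Qtot s ∧ (1 / 2) * ∑ y, |Qhat s y / Qtot s - πstar y| ≤ ε}).le
  calc 1 - δ ≤ μ.real badᶜ := by
        rw [probReal_compl_eq_one_sub (Set.toFinite _).measurableSet]; linarith
    _ ≤ _ := measureReal_mono h_good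

open Classical in
/-- If the importance weights are bounded by `C` and
`M ≥ (2C²N²/ε²)·ln(2(N+1)/δ)`, then with probability at least `1 − δ` the
self-normalized importance-sampled distribution is within total variation
distance `ε` of `π*`. -/
theorem mosaic_snis_tv_concentration
    {Y : Type*} [Fintype Y] [Nonempty Y] [DecidableEq Y]
    (q πstar : Y → ℝ)
    (hq_pos : ∀ y, 0 < q y) (hq_sum : ∑ y, q y = 1)
    (hπ_nonneg : ∀ y, 0 ≤ πstar y) (hπ_sum : ∑ y, πstar y = 1)
    (w : Y → ℝ) (hw : ∀ y, w y = πstar y / q y)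
    (C : ℝ) (hC : 0 < C) (hwC : ∀ y, w y ≤ C)
    (N : ℕ) (hN : N = Fintype.card Y)
    (ε δ : ℝ) (hε0 : 0 < ε) (hεN : ε ≤ (N : ℝ)) (hδ0 : 0 < δ) (hδ1 : δ < 1)
    (M : ℕ) (hM : 1 ≤ M)
    (hMbound : (2 * C ^ 2 * (N : ℝ) ^ 2 / ε ^ 2) *
      Real.log (2 * ((N : ℝ) + 1) / δ) ≤ (M : ℝ))
    (Qhat : (Fin M → Y) → Y → ℝ)
    (hQhat : ∀ s y, Qhat s y =
      (1 / (M : ℝ)) * ∑ j, w (s j) * (if s j = y then 1 else 0))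
    (Qtot : (Fin M → Y) → ℝ)
    (hQtot : ∀ s, Qtot s = (1 / (M : ℝ)) * ∑ j, w (s j)) :
    1 - δ ≤
      ∑ s : Fin M → Y,
        if (0 < Qtot s ∧
            (1 / 2) * ∑ y, |Qhat s y / Qtot s - πstar y| ≤ ε)
        then (∏ j, q (s j)) else 0 :=
  mosaic_snis_tv_concentration_general q πstar hq_pos hq_sum hπ_nonneg hπ_sum w hw C hC hwC N hN ε δ
    hε0 hεN hδ0 M hM hMbound Qhat hQhat Qtot hQtot
end

section
/- The softmax allocation with Rochet payments is strategyproof: for every true reward vector r ∈ ℝ^M, every reported vector r̂ ∈ ℝ^M, and every constant C ∈ ℝ, the utility from misreporting is at most the utility from truthful reporting, i.e., ⟨π(r̂), r⟩ − p(r̂) ≤ ⟨π(r), r⟩ − p(r); moreover the truthful utility equals U(r) + C. -/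
/-- The softmax allocation with Rochet payments is
strategyproof: misreporting never yields higher utility than truthful
reporting, and the truthful utility equals `U(r) + C`. -/
theorem mosaic_strategyproof
    (M : ℕ) (hM : 1 ≤ M) (τ : ℝ) (hτ : 0 < τ) (β : Fin M → ℝ)
    (U : (Fin M → ℝ) → ℝ)
    (hU : ∀ r, U r = τ * Real.log (∑ j, Real.exp (r j / τ + β j)))
    (π : (Fin M → ℝ) → Fin M → ℝ)
    (hπ : ∀ r k, π r k =
      Real.exp (r k / τ + β k) / ∑ j, Real.exp (r j / τ + β j))
    (C : ℝ) (p : (Fin M → ℝ) → ℝ)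
    (hp : ∀ r, p r = (∑ k, π r k * r k) - U r - C) :
    ∀ r rhat : Fin M → ℝ,
      ((∑ k, π rhat k * r k) - p rhat ≤ (∑ k, π r k * r k) - p r) ∧
      ((∑ k, π r k * r k) - p r = U r + C) := by
  intro r rhat
  have hne : Nonempty (Fin M) := ⟨⟨0, hM⟩⟩
  -- positivity of the partition sums
  have hS : ∀ s : Fin M → ℝ, 0 < ∑ j, Real.exp (s j / τ + β j) := fun s =>
    Finset.sum_pos (fun j _ => Real.exp_pos _) Finset.univ_nonempty
  have htruth : (∑ k, π r k * r k) - p r = U r + C := by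
    rw [hp]; ring
  refine ⟨?_, htruth⟩
  rw [hp rhat, htruth]
  -- reduce to: ∑ π(rhat)_k (r_k - rhat_k) ≤ U r - U rhat
  have key : (∑ k, π rhat k * (r k - rhat k)) ≤ U r - U rhat := by
    set w : Fin M → ℝ := π rhat with hw
    set t : Fin M → ℝ := fun k => (r k - rhat k) / τ with ht
    have hw0 : ∀ k ∈ Finset.univ, (0:ℝ) ≤ w k := by
      intro k _
      rw [hw, hπ]
      positivity
    have hw1 : ∑ k, w k = 1 := by
      simp only [hw, hπ]
      rw [← Finset.sum_div, div_self (hS rhat).ne']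
    have jensen : Real.exp (∑ k, w k * t k) ≤ ∑ k, w k * Real.exp (t k) := by
      have := convexOn_exp.map_sum_le (t := Finset.univ) (w := w) (p := t)
        hw0 hw1 (fun i _ => trivial)
      simpa [smul_eq_mul] using this
    have hwet : ∑ k, w k * Real.exp (t k)
        = (∑ j, Real.exp (r j / τ + β j)) / (∑ j, Real.exp (rhat j / τ + β j)) := by
      rw [Finset.sum_div]
      refine Finset.sum_congr rfl (fun k _ => ?_)
      rw [hw, hπ, ht]
      rw [div_mul_eq_mul_div, ← Real.exp_add]
      congr 1
      field_simp
      ring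
    have hlog : (∑ k, w k * t k) ≤ Real.log ((∑ j, Real.exp (r j / τ + β j)) / (∑ j, Real.exp (rhat j / τ + β j))) := by
      rw [← hwet]
      have hpos : 0 < ∑ k, w k * Real.exp (t k) := by
        rw [hwet]; exact div_pos (hS r) (hS rhat)
      calc (∑ k, w k * t k) = Real.log (Real.exp (∑ k, w k * t k)) := by
            rw [Real.log_exp]
        _ ≤ Real.log (∑ k, w k * Real.exp (t k)) :=
            Real.log_le_log (Real.exp_pos _) jensen
    have hUdiff : U r - U rhat = τ * Real.log ((∑ j, Real.exp (r j / τ + β j)) / (∑ j, Real.exp (rhat j / τ + β j))) := by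
      rw [hU, hU, Real.log_div (hS r).ne' (hS rhat).ne']
      ring
    rw [hUdiff]
    calc (∑ k, π rhat k * (r k - rhat k)) = τ * ∑ k, w k * t k := by
          rw [Finset.mul_sum]
          refine Finset.sum_congr rfl (fun k _ => ?_)
          rw [hw, ht]
          field_simp
      _ ≤ _ := by
          exact mul_le_mul_of_nonneg_left hlog hτ.le
  have expand : (∑ k, π rhat k * (r k - rhat k))
      = (∑ k, π rhat k * r k) - ∑ k, π rhat k * rhat k := by
    rw [← Finset.sum_sub_distrib]
    exact Finset.sum_congr rfl (fun k _ => by ring)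
  linarith [key, expand.symm.le, expand.le]
end

section
/- With the advertiser-specific offset C = −τ·log( ∑_{j=1}^M exp(β_j) ), if the advertiser's reward vector r ∈ ℝ^M satisfies r_k ≥ 0 for every coordinate k, then her expected utility under truthful reporting is nonnegative: ⟨π(r), r⟩ − p(r) = U(r) + C ≥ 0. -/
/-- With the advertiser-specific offset
`C = −τ·log(∑_j exp(β_j))`, an advertiser with coordinatewise nonnegative
reward vector has nonnegative truthful expected utility:
`⟨π(r), r⟩ − p(r) = U(r) + C ≥ 0`. -/
theorem mosaic_nonneg_reward_nonneg_utility
    (M : ℕ) (hM : 1 ≤ M) (τ : ℝ) (hτ : 0 < τ) (β : Fin M → ℝ)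
    (U : (Fin M → ℝ) → ℝ)
    (hU : ∀ r, U r = τ * Real.log (∑ j, Real.exp (r j / τ + β j)))
    (π : (Fin M → ℝ) → Fin M → ℝ)
    (hπ : ∀ r k, π r k =
      Real.exp (r k / τ + β k) / ∑ j, Real.exp (r j / τ + β j))
    (C : ℝ) (hC : C = -(τ * Real.log (∑ j, Real.exp (β j))))
    (p : (Fin M → ℝ) → ℝ)
    (hp : ∀ r, p r = (∑ k, π r k * r k) - U r - C)
    (r : Fin M → ℝ) (hr : ∀ k, 0 ≤ r k) :
    (∑ k, π r k * r k) - p r = U r + C ∧ 0 ≤ U r + C := by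
  constructor
  · rw [hp]; ring
  · have hne : (Finset.univ : Finset (Fin M)).Nonempty := by
      exact Finset.univ_nonempty_iff.mpr (Fin.pos_iff_nonempty.mp hM)
    have h1 : (0:ℝ) < ∑ j, Real.exp (β j) :=
      Finset.sum_pos (fun j _ => Real.exp_pos _) hne
    have hle : ∑ j, Real.exp (β j) ≤ ∑ j, Real.exp (r j / τ + β j) := by
      apply Finset.sum_le_sum
      intro j _
      apply Real.exp_le_exp.mpr
      have : 0 ≤ r j / τ := div_nonneg (hr j) hτ.le
      linarith
    have hlog := Real.log_le_log h1 hle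
    rw [hU, hC]
    nlinarith
end

section
/- The softmax allocation rule is cyclically monotone: for every integer k ≥ 1 and every cycle of reward vectors r^1, r^2, …, r^k ∈ ℝ^M with r^{k+1} := r^1, one has ∑_{i=1}^k ⟨π(r^i), r^{i+1} − r^i⟩ ≤ 0. -/
/-- The softmax allocation rule is cyclically monotone: for
every cycle of reward vectors `r^1, …, r^k` (with `r^{k+1} := r^1`),
`∑_{i=1}^k ⟨π(r^i), r^{i+1} − r^i⟩ ≤ 0`. -/
theorem mosaic_softmax_cyclically_monotone
    (M : ℕ) (hM : 1 ≤ M) (τ : ℝ) (hτ : 0 < τ) (β : Fin M → ℝ)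
    (π : (Fin M → ℝ) → Fin M → ℝ)
    (hπ : ∀ r k, π r k =
      Real.exp (r k / τ + β k) / ∑ j, Real.exp (r j / τ + β j)) :
    ∀ (k : ℕ), 1 ≤ k → ∀ (rseq : ℕ → Fin M → ℝ), rseq k = rseq 0 →
      ∑ i ∈ Finset.range k,
        ∑ j, π (rseq i) j * (rseq (i + 1) j - rseq i j) ≤ 0 := by
  have hne : Nonempty (Fin M) := ⟨⟨0, hM⟩⟩
  set Φ : (Fin M → ℝ) → ℝ :=
    fun r => τ * Real.log (∑ j, Real.exp (r j / τ + β j)) with hΦ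
  have Zpos : ∀ t : Fin M → ℝ, 0 < ∑ j, Real.exp (t j / τ + β j) := fun t =>
    Finset.sum_pos (fun j _ => Real.exp_pos _) Finset.univ_nonempty
  have key : ∀ r s : Fin M → ℝ, ∑ j, π r j * (s j - r j) ≤ Φ s - Φ r := by
    intro r s
    set Zr := ∑ j, Real.exp (r j / τ + β j) with hZr
    set Zs := ∑ j, Real.exp (s j / τ + β j) with hZs
    have hZrpos : 0 < Zr := Zpos r
    have hZspos : 0 < Zs := Zpos s
    set m := ∑ j, (Real.exp (r j / τ + β j) / Zr) *
      ((s j / τ + β j) - (r j / τ + β j)) with hm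
    have hsum_m : ∑ j, Real.exp (r j / τ + β j) *
        ((s j / τ + β j) - (r j / τ + β j)) = Zr * m := by
      rw [hm, Finset.mul_sum]
      refine Finset.sum_congr rfl fun j _ => ?_
      field_simp
    have hZ : Real.exp m * Zr ≤ Zs := by
      have h1 : ∀ j : Fin M, Real.exp m * (Real.exp (r j / τ + β j) *
          ((s j / τ + β j) - (r j / τ + β j) - m + 1)) ≤
          Real.exp (s j / τ + β j) := by
        intro j
        have h2 := Real.add_one_le_exp ((s j / τ + β j) - (r j / τ + β j) - m)
        calc Real.exp m * (Real.exp (r j / τ + β j) *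
              ((s j / τ + β j) - (r j / τ + β j) - m + 1))
            ≤ Real.exp m * (Real.exp (r j / τ + β j) *
              Real.exp ((s j / τ + β j) - (r j / τ + β j) - m)) := by
              apply mul_le_mul_of_nonneg_left _ (Real.exp_pos m).le
              exact mul_le_mul_of_nonneg_left h2 (Real.exp_pos _).le
          _ = Real.exp (s j / τ + β j) := by
              rw [← Real.exp_add, ← Real.exp_add]; ring_nf
      have h3 : ∑ j, Real.exp m * (Real.exp (r j / τ + β j) *
          ((s j / τ + β j) - (r j / τ + β j) - m + 1)) = Real.exp m * Zr := by
        have : ∑ j, Real.exp (r j / τ + β j) *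
            ((s j / τ + β j) - (r j / τ + β j) - m + 1) = Zr := by
          have expand : ∀ j : Fin M, Real.exp (r j / τ + β j) *
              ((s j / τ + β j) - (r j / τ + β j) - m + 1) =
              Real.exp (r j / τ + β j) * ((s j / τ + β j) - (r j / τ + β j))
              + Real.exp (r j / τ + β j) * (1 - m) := fun j => by ring
          simp only [expand, Finset.sum_add_distrib, hsum_m,
            ← Finset.sum_mul]
          rw [← hZr]; ring
        rw [← Finset.mul_sum, this]
      calc Real.exp m * Zr = ∑ j, Real.exp m * (Real.exp (r j / τ + β j) *
            ((s j / τ + β j) - (r j / τ + β j) - m + 1)) := h3.symm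
        _ ≤ ∑ j, Real.exp (s j / τ + β j) :=
            Finset.sum_le_sum fun j _ => h1 j
        _ = Zs := rfl
    have hlog : m + Real.log Zr ≤ Real.log Zs := by
      have := Real.log_le_log (by positivity) hZ
      rwa [Real.log_mul (Real.exp_pos m).ne' hZrpos.ne', Real.log_exp] at this
    have hLHS : ∑ j, π r j * (s j - r j) = τ * m := by
      rw [hm, Finset.mul_sum]
      refine Finset.sum_congr rfl fun j _ => ?_
      rw [hπ, ← hZr]
      field_simp
      ring
    rw [hLHS, hΦ]
    simp only
    rw [← hZr, ← hZs]
    nlinarith [hlog, hτ]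
  intro k hk rseq hcycle
  calc ∑ i ∈ Finset.range k, ∑ j, π (rseq i) j * (rseq (i + 1) j - rseq i j)
      ≤ ∑ i ∈ Finset.range k, (Φ (rseq (i + 1)) - Φ (rseq i)) :=
        Finset.sum_le_sum fun i _ => key (rseq i) (rseq (i + 1))
    _ = Φ (rseq k) - Φ (rseq 0) := Finset.sum_range_sub (fun i => Φ (rseq i)) k
    _ = 0 := by rw [hcycle, sub_self]
end
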